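/- arXiv:0804.3399 — 3 statements merged into one kernel-verified Lean document; each statement's English description precedes it below -/
import Mathlib

section
/- Let k > 0 and g(x,y) := e^{ik|x−y|}/(4π|x−y|). There is an absolute constant c > 0 such that for all a > 0 with k·a ≤ 1 and all x, y ∈ ℝ³ with |y| ≤ a and |x| ≥ 2a, setting β := x/|x|, one has | g(x,y) − e^{ik|x|} e^{−ik β·y} / (4π|x|) | ≤ c·( a + k a² ) / |x|². -/
open scoped RealInnerProductSpace

/-- The outgoing Green's function `g(x,y) = e^{ik|x−y|}/(4π|x−y|)` of the Helmholtz
operator `Δ + k²` in `ℝ³`. -/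
noncomputable def greenG (k : ℝ) (x y : EuclideanSpace ℝ (Fin 3)) : ℂ :=
  Complex.exp (Complex.I * (k : ℂ) * (‖x - y‖ : ℂ)) / ((4 * Real.pi * ‖x - y‖ : ℝ) : ℂ)

/-!
Write `r = |x|`, `ρ = |x - y|` and `q = r - β·y`. The difference
`e^{ikρ}/ρ - e^{ikq}/r` splits as `e^{ikρ} (1/ρ - 1/r) + (e^{ikρ} - e^{ikq})/r`.
The first term is at most `|r - ρ|/(ρ r) ≤ 2|y|/r²`, since `|r - ρ| ≤ |y|` and `ρ ≥ r/2`.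
The phase error in the second term is of second order: `ρ² - q² = |y|² - (β·y)²` lies in
`[0, |y|²]` and `ρ + q ≥ r`, so `|ρ - q| ≤ |y|²/r`, and `t ↦ e^{it}` is 1-Lipschitz.
Dividing by `4π` gives the bound with `c = 1`.
-/

open Complex in
theorem norm_exp_I_mul_sub_exp_I_mul_le (t s : ℝ) :
    ‖exp (I * t) - exp (I * s)‖ ≤ |t - s| := by
  have hfactor : exp (I * t) - exp (I * s) = exp (I * s) * (exp (I * ↑(t - s)) - 1) := by
    rw [mul_sub, ← exp_add]; push_cast; ring_nf
  rw [hfactor, norm_mul, norm_exp_I_mul_ofReal, one_mul, ← Real.norm_eq_abs]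
  exact Real.norm_exp_I_mul_ofReal_sub_one_le

theorem abs_norm_sub_norm_sub_le {E : Type*} [SeminormedAddCommGroup E] (x y : E) :
    |‖x‖ - ‖x - y‖| ≤ ‖y‖ := by
  simpa using abs_norm_sub_norm_le x (x - y)

theorem abs_inv_norm_sub_sub_inv_norm_le {E : Type*} [NormedAddCommGroup E] {x y : E}
    (h : 2 * ‖y‖ ≤ ‖x‖) :
    |‖x - y‖⁻¹ - ‖x‖⁻¹| ≤ 2 * ‖y‖ / ‖x‖ ^ 2 := by
  rcases (norm_nonneg x).eq_or_lt with hx | hx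
  · have : y = 0 := norm_le_zero_iff.1 (by linarith [norm_nonneg y])
    simp [this, ← hx]
  have hdist := abs_le.1 (abs_norm_sub_norm_sub_le x y)
  have hρ : ‖x‖ / 2 ≤ ‖x - y‖ := by linarith
  have hρ0 : 0 < ‖x - y‖ := by linarith
  rw [inv_sub_inv hρ0.ne' hx.ne', abs_div, abs_of_pos (mul_pos hρ0 hx),
    div_le_div_iff₀ (mul_pos hρ0 hx) (by positivity)]
  nlinarith [abs_le.2 hdist, mul_le_mul_of_nonneg_right hρ hx.le]

theorem abs_norm_sub_sub_sub_inner_div_norm_le {E : Type*} [NormedAddCommGroup E]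
    [InnerProductSpace ℝ E] {x y : E} (h : 2 * ‖y‖ ≤ ‖x‖) :
    |‖x - y‖ - (‖x‖ - ⟪x, y⟫ / ‖x‖)| ≤ ‖y‖ ^ 2 / ‖x‖ := by
  rcases (norm_nonneg x).eq_or_lt with hx | hx
  · have : y = 0 := norm_le_zero_iff.1 (by linarith [norm_nonneg y])
    simp [this, ← hx]
  set p := ⟪x, y⟫ / ‖x‖ with hp
  have hpy : |p| ≤ ‖y‖ := by
    rw [hp, abs_div, abs_norm, div_le_iff₀ hx, mul_comm]
    exact abs_real_inner_le_norm x y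
  -- both sides are the squared norm of the component of `y` orthogonal to `x`
  have hsq : ‖x - y‖ ^ 2 - (‖x‖ - p) ^ 2 = ‖y‖ ^ 2 - p ^ 2 := by
    rw [norm_sub_sq_real, hp]; field_simp; ring
  have hdist := abs_le.1 (abs_norm_sub_norm_sub_le x y)
  have hp' := abs_le.1 hpy
  have hq : 0 ≤ ‖x‖ - p := by linarith
  have hρq : ‖x‖ - p ≤ ‖x - y‖ :=
    (sq_le_sq₀ hq (norm_nonneg _)).1 (by nlinarith [sq_nonneg p])
  rw [abs_of_nonneg (sub_nonneg.2 hρq), le_div_iff₀ hx]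
  nlinarith

open Complex in
theorem norm_exp_div_norm_sub_sub_far_field_le {E : Type*} [NormedAddCommGroup E]
    [InnerProductSpace ℝ E] (k : ℝ) {x y : E} (h : 2 * ‖y‖ ≤ ‖x‖) :
    ‖exp (I * ↑(k * ‖x - y‖)) / ‖x - y‖ - exp (I * ↑(k * (‖x‖ - ⟪x, y⟫ / ‖x‖))) / ‖x‖‖ ≤
      (2 * ‖y‖ + |k| * ‖y‖ ^ 2) / ‖x‖ ^ 2 := by
  set A := exp (I * ↑(k * ‖x - y‖))
  set B := exp (I * ↑(k * (‖x‖ - ⟪x, y⟫ / ‖x‖)))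
  have hsplit : A / ‖x - y‖ - B / ‖x‖ = A * ↑(‖x - y‖⁻¹ - ‖x‖⁻¹) + (A - B) * ↑‖x‖⁻¹ := by
    push_cast; ring
  have hphase : ‖A - B‖ ≤ |k| * (‖y‖ ^ 2 / ‖x‖) := by
    refine (norm_exp_I_mul_sub_exp_I_mul_le _ _).trans ?_
    rw [← mul_sub, abs_mul]
    exact mul_le_mul_of_nonneg_left (abs_norm_sub_sub_sub_inner_div_norm_le h) (abs_nonneg k)
  calc ‖A / ‖x - y‖ - B / ‖x‖‖
      ≤ ‖A‖ * |‖x - y‖⁻¹ - ‖x‖⁻¹| + ‖A - B‖ * ‖x‖⁻¹ := by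
        rw [hsplit]
        refine (norm_add_le _ _).trans_eq ?_
        simp only [norm_mul, norm_real, Real.norm_eq_abs, abs_inv, abs_norm]
    _ ≤ 1 * (2 * ‖y‖ / ‖x‖ ^ 2) + |k| * (‖y‖ ^ 2 / ‖x‖) * ‖x‖⁻¹ := by
        rw [norm_exp_I_mul_ofReal]
        gcongr
        exact abs_inv_norm_sub_sub_inv_norm_le h
    _ = (2 * ‖y‖ + |k| * ‖y‖ ^ 2) / ‖x‖ ^ 2 := by ring

/-- There is an absolute constant `c > 0` such that for all `k > 0`, `a > 0` with
`k·a ≤ 1`, and all `x, y ∈ ℝ³` with `|y| ≤ a` and `|x| ≥ 2a`, setting `β := x/|x|`,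
one has `|g(x,y) − e^{ik|x|} e^{−ik β·y}/(4π|x|)| ≤ c (a + k a²)/|x|²`. -/
theorem stmt4 :
    ∃ c : ℝ, 0 < c ∧
      ∀ (k a : ℝ), 0 < k → 0 < a → k * a ≤ 1 →
        ∀ x y : EuclideanSpace ℝ (Fin 3), ‖y‖ ≤ a → 2 * a ≤ ‖x‖ →
          ‖greenG k x y -
              Complex.exp (Complex.I * (k : ℂ) * (‖x‖ : ℂ)) *
                Complex.exp (-(Complex.I * (k : ℂ) * ((⟪x, y⟫ / ‖x‖ : ℝ) : ℂ))) /
                ((4 * Real.pi * ‖x‖ : ℝ) : ℂ)‖ ≤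
            c * (a + k * a ^ 2) / ‖x‖ ^ 2 := by
  refine ⟨1, one_pos, fun k a hk _ _ x y hy hx => ?_⟩
  have hfar := norm_exp_div_norm_sub_sub_far_field_le k (x := x) (y := y) (by linarith)
  have hexp : Complex.exp (Complex.I * k * ‖x‖) *
      Complex.exp (-(Complex.I * k * ((⟪x, y⟫ / ‖x‖ : ℝ) : ℂ))) =
      Complex.exp (Complex.I * ↑(k * (‖x‖ - ⟪x, y⟫ / ‖x‖))) := by
    rw [← Complex.exp_add]; push_cast; ring_nf
  have hscale : greenG k x y - Complex.exp (Complex.I * ↑(k * (‖x‖ - ⟪x, y⟫ / ‖x‖))) /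
        ((4 * Real.pi * ‖x‖ : ℝ) : ℂ) =
      ((4 * Real.pi)⁻¹ : ℝ) * (Complex.exp (Complex.I * ↑(k * ‖x - y‖)) / ‖x - y‖ -
        Complex.exp (Complex.I * ↑(k * (‖x‖ - ⟪x, y⟫ / ‖x‖))) / ‖x‖) := by
    rw [greenG]; push_cast; ring_nf
  have hπ : (4 * Real.pi)⁻¹ ≤ 2⁻¹ := inv_anti₀ two_pos (by linarith [Real.pi_gt_three])
  have hy2 : ‖y‖ ^ 2 ≤ a ^ 2 := pow_le_pow_left₀ (norm_nonneg y) hy 2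
  rw [abs_of_pos hk] at hfar
  rw [hexp, hscale, norm_mul, Complex.norm_real, Real.norm_of_nonneg (by positivity),
    one_mul]
  calc (4 * Real.pi)⁻¹ * _ ≤ 2⁻¹ * ((2 * ‖y‖ + k * ‖y‖ ^ 2) / ‖x‖ ^ 2) := by
        gcongr
    _ ≤ (a + k * a ^ 2) / ‖x‖ ^ 2 := by
        rw [← mul_div_assoc]
        gcongr
        nlinarith
end

section
/- Let γ > 0 and let h : [0,1] → ℝ be continuously differentiable with h(t) > 0 for all t ∈ [0,1]. For ν > 0 define I(ν) := ∫_0^1 t³ · (d/dt)[ γ(1−t)² h(t) ] / ( ν + γ(1−t)² h(t) ) dt. Then there exists a constant C > 0 such that | I(ν) − ln ν | ≤ C for all ν ∈ (0,1]. In particular, I(ν) = ln ν + O(1) as ν → 0⁺. -/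
/-!
With `f = ν + γ(1−t)²h`, the integrand is `t³ (log f)'`, so integration by parts gives
`I(ν) = log f(1) − 3 ∫₀¹ t² log f = log ν − 3 ∫₀¹ t² log f`. On `[0,1)` we have
`γ (min h) (1−t)² ≤ f ≤ 1 + γ (max h)`, hence
`|log f| ≤ |log (γ min h)| + |log (1 + γ max h)| − 2 log (1−t)`, and the right-hand side has a
finite integral that does not depend on `ν`.
-/

open MeasureTheory intervalIntegral Real Set

theorem integral_pow_succ_mul_deriv_div_eq {f f' : ℝ → ℝ}
    (hf : ∀ t ∈ Icc (0 : ℝ) 1, HasDerivWithinAt f (f' t) (Icc 0 1) t)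
    (hf' : IntervalIntegrable f' volume 0 1) (hpos : ∀ t ∈ Icc (0 : ℝ) 1, 0 < f t) (n : ℕ) :
    ∫ t in (0 : ℝ)..1, t ^ (n + 1) * f' t / f t =
      log (f 1) - (n + 1) * ∫ t in (0 : ℝ)..1, t ^ n * log (f t) := by
  have hlog : ∀ t ∈ Icc (0 : ℝ) 1,
      HasDerivWithinAt (fun t ↦ log (f t)) (f' t / f t) (Icc 0 1) t :=
    fun t ht ↦ (hf t ht).log (hpos t ht).ne'
  have hpow : ∀ t ∈ Icc (0 : ℝ) 1,
      HasDerivWithinAt (fun t : ℝ ↦ t ^ (n + 1)) ((n + 1) * t ^ n) (Icc 0 1) t := fun t _ ↦ by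
    simpa using (hasDerivAt_pow (n + 1) t).hasDerivWithinAt
  have hinv : ContinuousOn (fun t ↦ (f t)⁻¹) (uIcc 0 1) := by
    rw [uIcc_of_le zero_le_one]
    exact ContinuousOn.inv₀ (fun t ht ↦ (hf t ht).continuousWithinAt) fun t ht ↦ (hpos t ht).ne'
  have hquot : IntervalIntegrable (fun t ↦ f' t / f t) volume 0 1 := by
    simpa only [div_eq_mul_inv] using hf'.mul_continuousOn hinv
  calc ∫ t in (0 : ℝ)..1, t ^ (n + 1) * f' t / f t
      = ∫ t in (0 : ℝ)..1, t ^ (n + 1) * (f' t / f t) := by simp only [mul_div_assoc]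
    _ = 1 ^ (n + 1) * log (f 1) - 0 ^ (n + 1) * log (f 0) -
          ∫ t in (0 : ℝ)..1, (n + 1) * t ^ n * log (f t) :=
        integral_mul_deriv_eq_deriv_mul_of_hasDerivWithinAt
          (by rwa [uIcc_of_le zero_le_one]) (by rwa [uIcc_of_le zero_le_one])
          ((continuous_const.mul (continuous_pow n)).intervalIntegrable 0 1) hquot
    _ = log (f 1) - (n + 1) * ∫ t in (0 : ℝ)..1, t ^ n * log (f t) := by
        simp [mul_assoc, intervalIntegral.integral_const_mul]

theorem abs_log_le_abs_log_add_abs_log {a b x : ℝ} (ha : 0 < a) (hax : a ≤ x) (hxb : x ≤ b) :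
    |log x| ≤ |log a| + |log b| := by
  have hlo := log_le_log ha hax
  have hhi := log_le_log (ha.trans_le hax) hxb
  rw [abs_le]
  constructor <;>
    linarith [neg_abs_le (log a), le_abs_self (log b), abs_nonneg (log a), abs_nonneg (log b)]

theorem integral_log_one_sub : ∫ t in (0 : ℝ)..1, log (1 - t) = -1 := by
  rw [integral_comp_sub_left (fun s ↦ log s), integral_log]
  norm_num

theorem abs_integral_pow_mul_log_le {F : ℝ → ℝ} {c D : ℝ} (hc : 0 < c)
    (hlow : ∀ t ∈ Ioo (0 : ℝ) 1, c * (1 - t) ^ 2 ≤ F t) (hup : ∀ t ∈ Ioo (0 : ℝ) 1, F t ≤ D)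
    (n : ℕ) : |∫ t in (0 : ℝ)..1, t ^ n * log (F t)| ≤ |log c| + |log D| + 2 := by
  have hbound : ∀ t ∈ Ioo (0 : ℝ) 1,
      |t ^ n * log (F t)| ≤ |log c| + |log D| - 2 * log (1 - t) := by
    intro t ht
    have h1t : 0 < 1 - t := sub_pos.2 ht.2
    have hpow : |t ^ n| ≤ 1 := by
      rw [abs_pow, abs_of_pos ht.1]; exact pow_le_one₀ ht.1.le ht.2.le
    have hlog1t : 2 * log (1 - t) ≤ 0 := by linarith [log_nonpos h1t.le (by linarith [ht.1])]
    have hlog_low : |log (c * (1 - t) ^ 2)| ≤ |log c| - 2 * log (1 - t) := by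
      rw [log_mul hc.ne' (by positivity), log_pow, Nat.cast_ofNat]
      calc |log c + 2 * log (1 - t)| ≤ |log c| + |2 * log (1 - t)| := abs_add_le _ _
        _ = |log c| - 2 * log (1 - t) := by rw [abs_of_nonpos hlog1t]; ring
    calc |t ^ n * log (F t)| ≤ 1 * |log (F t)| := by
          rw [abs_mul]; exact mul_le_mul_of_nonneg_right hpow (abs_nonneg _)
      _ ≤ |log (c * (1 - t) ^ 2)| + |log D| := by
          rw [one_mul]
          exact abs_log_le_abs_log_add_abs_log (by positivity) (hlow t ht) (hup t ht)
      _ ≤ |log c| + |log D| - 2 * log (1 - t) := by linarith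
  have hlog1 : IntervalIntegrable (fun t ↦ log (1 - t)) volume 0 1 := by
    simpa using (intervalIntegrable_log' (a := 1) (b := 0)).comp_sub_left 1
  have hint : IntervalIntegrable (fun t ↦ |log c| + |log D| - 2 * log (1 - t)) volume 0 1 :=
    intervalIntegrable_const.sub (hlog1.const_mul 2)
  have hae : ∀ᵐ t, t ∈ Ioc (0 : ℝ) 1 →
      ‖t ^ n * log (F t)‖ ≤ |log c| + |log D| - 2 * log (1 - t) := by
    filter_upwards [Measure.ae_ne volume 1] with t ht1 ht
    exact hbound t ⟨ht.1, lt_of_le_of_ne ht.2 ht1⟩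
  calc |∫ t in (0 : ℝ)..1, t ^ n * log (F t)|
      ≤ ∫ t in (0 : ℝ)..1, (|log c| + |log D| - 2 * log (1 - t)) :=
        norm_integral_le_of_norm_le zero_le_one hae hint
    _ = |log c| + |log D| + 2 := by
        rw [integral_sub intervalIntegrable_const (hlog1.const_mul 2),
          intervalIntegral.integral_const_mul, integral_log_one_sub]
        simp

theorem HasDerivWithinAt.const_mul_one_sub_sq_mul {h : ℝ → ℝ} {h' : ℝ} {s : Set ℝ} {t : ℝ}
    (γ : ℝ) (hh : HasDerivWithinAt h h' s t) :
    HasDerivWithinAt (fun t ↦ γ * (1 - t) ^ 2 * h t)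
      (γ * (-2 * (1 - t) * h t + (1 - t) ^ 2 * h')) s t := by
  have hsq : HasDerivWithinAt (fun t : ℝ ↦ γ * (1 - t) ^ 2) (γ * (-2 * (1 - t))) s t :=
    ((((hasDerivWithinAt_id t s).const_sub 1).pow 2).const_mul γ).congr_deriv (by simp)
  exact (hsq.mul hh).congr_deriv (by ring)

/-- Let `γ > 0` and `h : [0,1] → ℝ` be continuously differentiable (with derivative `h'`)
and positive.  For `ν > 0`, let
`I(ν) = ∫₀¹ t³ (d/dt)[γ(1−t)² h(t)] / (ν + γ(1−t)² h(t)) dt`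
(by the product rule, `(d/dt)[γ(1−t)²h(t)] = γ(−2(1−t)h(t) + (1−t)² h'(t))`).
Then there is `C > 0` with `|I(ν) − ln ν| ≤ C` for all `ν ∈ (0,1]`; in particular
`I(ν) = ln ν + O(1)` as `ν → 0⁺`. -/
theorem stmt8 (γ : ℝ) (hγ : 0 < γ) (h h' : ℝ → ℝ)
    (hderiv : ∀ t ∈ Set.Icc (0 : ℝ) 1, HasDerivWithinAt h (h' t) (Set.Icc 0 1) t)
    (hcont : ContinuousOn h' (Set.Icc 0 1))
    (hpos : ∀ t ∈ Set.Icc (0 : ℝ) 1, 0 < h t)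
    (I : ℝ → ℝ)
    (hI : ∀ ν : ℝ, I ν = ∫ t in (0 : ℝ)..1,
      t ^ 3 * (γ * (-2 * (1 - t) * h t + (1 - t) ^ 2 * h' t)) /
        (ν + γ * (1 - t) ^ 2 * h t)) :
    ∃ C : ℝ, 0 < C ∧ ∀ ν ∈ Set.Ioc (0 : ℝ) 1, |I ν - Real.log ν| ≤ C := by
  have hhC : ContinuousOn h (Icc 0 1) := fun t ht ↦ (hderiv t ht).continuousWithinAt
  obtain ⟨a, ha, hmin⟩ := isCompact_Icc.exists_isMinOn (nonempty_Icc.2 zero_le_one) hhC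
  obtain ⟨M, hM⟩ := isCompact_Icc.bddAbove_image hhC
  refine ⟨3 * (|log (γ * h a)| + |log (1 + γ * M)| + 2), by positivity, fun ν hν ↦ ?_⟩
  have hf'int : IntervalIntegrable (fun t ↦ γ * (-2 * (1 - t) * h t + (1 - t) ^ 2 * h' t))
      volume 0 1 := by
    refine ContinuousOn.intervalIntegrable ?_
    rw [uIcc_of_le zero_le_one]
    fun_prop
  have hIBP : I ν = log ν - 3 * ∫ t in (0 : ℝ)..1, t ^ 2 * log (ν + γ * (1 - t) ^ 2 * h t) := by
    have := integral_pow_succ_mul_deriv_div_eq (n := 2)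
      (fun t ht ↦ ((hderiv t ht).const_mul_one_sub_sq_mul γ).const_add ν) hf'int
      (fun t ht ↦ by have := hpos t ht; have := hν.1; positivity)
    norm_num only [mul_zero, zero_mul, add_zero] at this
    rw [hI ν, this]
  rw [hIBP, sub_sub_cancel_left, abs_neg, abs_mul, abs_of_pos three_pos]
  gcongr
  refine abs_integral_pow_mul_log_le (mul_pos hγ (hpos a ha)) (fun t ht ↦ ?_) (fun t ht ↦ ?_) 2
  · calc γ * h a * (1 - t) ^ 2 = γ * (1 - t) ^ 2 * h a := by ring
      _ ≤ γ * (1 - t) ^ 2 * h t := by gcongr; exact hmin (Ioo_subset_Icc_self ht)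
      _ ≤ ν + γ * (1 - t) ^ 2 * h t := le_add_of_nonneg_left hν.1.le
  · have ht' := Ioo_subset_Icc_self ht
    calc ν + γ * (1 - t) ^ 2 * h t ≤ 1 + γ * 1 * M := by
          gcongr
          · exact hν.2
          · exact (hpos t ht').le
          · exact pow_le_one₀ (by linarith [ht.2]) (by linarith [ht.1])
          · exact hM (mem_image_of_mem h ht')
      _ = 1 + γ * M := by ring
end

section
/- Let γ > 0, k > 0, κ > 0, and let h : [0,1] → ℝ be continuously differentiable with h(t) > 0 for all t ∈ [0,1]. For a > 0 define I(a) := ∫_0^1 t³ · (d/dt)[ γ(1−t)² h(t) ] / ( 4π k² a^κ + γ(1−t)² h(t) ) dt. Then there is a constant C₀ > 0 with | I(a) − κ ln a | ≤ C₀ for all a ∈ (0,1]; consequently lim_{a→0⁺} a^κ I(a) = 0, and there is no nonzero constant c ∈ ℝ such that I(a) = c·a^{−κ}(1+o(1)) as a → 0⁺. -/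
/-!
Write `G t = γ (1 - t)² h t` and `A = 4π k² a^κ`. Since `t³ log (A + G t)` equals `log A` at
`t = 1` and `0` at `t = 0`, integrating by parts gives `I(a) = log A - ∫₀¹ 3t² log (A + G t)`.
The last integral is monotone in `A`, so for `0 < A ≤ 4π k²` it lies between its values at
`A = 0` (finite: `G` vanishes only to second order at `t = 1` and `log` is integrable) and at
`A = 4π k²`. Hence `I(a) - κ log a` stays bounded; then `a^κ I(a) → 0`, which excludes
`I(a) ~ c a^(-κ)` with `c ≠ 0`.
-/

open MeasureTheory Filter Topology Real Set

theorem intervalIntegrable_log_one_sub_sq_mul {g : ℝ → ℝ} (hg : ContinuousOn g (Icc 0 1))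
    (hg_pos : ∀ t ∈ Icc (0 : ℝ) 1, 0 < g t) :
    IntervalIntegrable (fun t => log ((1 - t) ^ 2 * g t)) volume 0 1 := by
  have hsum : IntervalIntegrable (fun t => 2 * log (1 - t) + log (g t)) volume 0 1 := by
    refine IntervalIntegrable.add ?_ <|
      (hg.log fun t ht => (hg_pos t ht).ne').intervalIntegrable_of_Icc zero_le_one
    simpa using
      ((intervalIntegral.intervalIntegrable_log' (a := 1) (b := 0)).comp_sub_left 1).const_mul 2
  rw [intervalIntegrable_iff_integrableOn_Ioo_of_le zero_le_one] at hsum ⊢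
  refine hsum.congr_fun (fun t ht => ?_) measurableSet_Ioo
  rw [log_mul (pow_ne_zero 2 (sub_ne_zero.2 ht.2.ne')) (hg_pos t (Ioo_subset_Icc_self ht)).ne',
    log_pow]
  push_cast
  rfl

section LogIntegral

variable {G G' : ℝ → ℝ}

theorem integral_pow_three_mul_deriv_div_add {A : ℝ}
    (hG : ∀ t ∈ Icc (0 : ℝ) 1, HasDerivWithinAt G (G' t) (Icc 0 1) t)
    (hG' : ContinuousOn G' (Icc 0 1)) (hA : ∀ t ∈ Icc (0 : ℝ) 1, 0 < A + G t)
    (hG1 : G 1 = 0) :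
    ∫ t in (0 : ℝ)..1, t ^ 3 * G' t / (A + G t)
      = log A - ∫ t in (0 : ℝ)..1, 3 * t ^ 2 * log (A + G t) := by
  have hGc : ContinuousOn G (Icc 0 1) := fun t ht => (hG t ht).continuousWithinAt
  have hlog : ContinuousOn (fun t => log (A + G t)) (Icc 0 1) :=
    (continuousOn_const.add hGc).log fun t ht => (hA t ht).ne'
  have hint₁ : IntervalIntegrable (fun t => 3 * t ^ 2 * log (A + G t)) volume 0 1 :=
    ((continuousOn_const.mul (continuousOn_pow 2)).mul hlog).intervalIntegrable_of_Icc
      zero_le_one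
  have hint₂ : IntervalIntegrable (fun t => t ^ 3 * G' t / (A + G t)) volume 0 1 :=
    (((continuousOn_pow 3).mul hG').div (continuousOn_const.add hGc) fun t ht =>
      (hA t ht).ne').intervalIntegrable_of_Icc zero_le_one
  have hFTC : ∫ t in (0 : ℝ)..1, (3 * t ^ 2 * log (A + G t) + t ^ 3 * G' t / (A + G t))
      = log A := by
    rw [intervalIntegral.integral_eq_sub_of_hasDerivAt_of_le zero_le_one
      ((continuousOn_pow 3).mul hlog) (fun t ht => ?_) (hint₁.add hint₂)]
    · simp [hG1]
    · have hGt : HasDerivAt G (G' t) t :=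
        (hG t (Ioo_subset_Icc_self ht)).hasDerivAt (Icc_mem_nhds ht.1 ht.2)
      exact ((hasDerivAt_pow 3 t).mul
        ((hGt.const_add A).log (hA t (Ioo_subset_Icc_self ht)).ne')).congr_deriv
          (by norm_num [mul_div_assoc])
  rw [intervalIntegral.integral_add hint₁ hint₂] at hFTC
  linarith

theorem integral_mul_log_add_mono {w : ℝ → ℝ} {A B : ℝ} (hA : 0 ≤ A) (hAB : A ≤ B)
    (hw : ∀ t ∈ Ioo (0 : ℝ) 1, 0 ≤ w t) (hG : ∀ t ∈ Ioo (0 : ℝ) 1, 0 < G t)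
    (hintA : IntervalIntegrable (fun t => w t * log (A + G t)) volume 0 1)
    (hintB : IntervalIntegrable (fun t => w t * log (B + G t)) volume 0 1) :
    ∫ t in (0 : ℝ)..1, w t * log (A + G t) ≤ ∫ t in (0 : ℝ)..1, w t * log (B + G t) :=
  intervalIntegral.integral_mono_on_of_le_Ioo zero_le_one hintA hintB fun t ht =>
    mul_le_mul_of_nonneg_left (log_le_log (by linarith [hG t ht]) (by linarith)) (hw t ht)

theorem exists_abs_integral_pow_three_mul_deriv_div_add_sub_log_le {K : ℝ} (hK : 0 < K)
    (hG : ∀ t ∈ Icc (0 : ℝ) 1, HasDerivWithinAt G (G' t) (Icc 0 1) t)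
    (hG' : ContinuousOn G' (Icc 0 1)) (hG_pos : ∀ t ∈ Ico (0 : ℝ) 1, 0 < G t) (hG1 : G 1 = 0)
    (hG_log : IntervalIntegrable (fun t => log (G t)) volume 0 1) :
    ∃ C, 0 < C ∧
      ∀ A ∈ Ioc 0 K, |(∫ t in (0 : ℝ)..1, t ^ 3 * G' t / (A + G t)) - log A| ≤ C := by
  set J : ℝ → ℝ := fun A => ∫ t in (0 : ℝ)..1, 3 * t ^ 2 * log (A + G t)
  have hG_nonneg : ∀ t ∈ Icc (0 : ℝ) 1, 0 ≤ G t := fun t ht =>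
    (eq_or_lt_of_le ht.2).elim (fun h => (h ▸ hG1).ge) fun h => (hG_pos t ⟨ht.1, h⟩).le
  have hGc : ContinuousOn G (Icc 0 1) := fun t ht => (hG t ht).continuousWithinAt
  have hint : ∀ A, 0 < A → IntervalIntegrable (fun t => 3 * t ^ 2 * log (A + G t)) volume 0 1 :=
    fun A hA => ContinuousOn.intervalIntegrable_of_Icc zero_le_one <|
      (continuousOn_const.mul (continuousOn_pow 2)).mul <|
        ContinuousOn.log (f := fun t => A + G t) (continuousOn_const.add hGc) fun t ht =>
          (add_pos_of_pos_of_nonneg hA (hG_nonneg t ht)).ne'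
  have hint₀ : IntervalIntegrable (fun t => 3 * t ^ 2 * log (0 + G t)) volume 0 1 := by
    simpa only [zero_add] using hG_log.continuousOn_mul (g := fun t => 3 * t ^ 2) (by fun_prop)
  refine ⟨|J 0| + |J K| + 1, by positivity, fun A hA => ?_⟩
  have hw : ∀ t ∈ Ioo (0 : ℝ) 1, 0 ≤ 3 * t ^ 2 := fun t _ => by positivity
  have hG_pos' : ∀ t ∈ Ioo (0 : ℝ) 1, 0 < G t := fun t ht => hG_pos t (Ioo_subset_Ico_self ht)
  have hlower : J 0 ≤ J A :=
    integral_mul_log_add_mono le_rfl hA.1.le hw hG_pos' hint₀ (hint A hA.1)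
  have hupper : J A ≤ J K :=
    integral_mul_log_add_mono hA.1.le hA.2 hw hG_pos' (hint A hA.1) (hint K hK)
  rw [integral_pow_three_mul_deriv_div_add hG hG'
    (fun t ht => add_pos_of_pos_of_nonneg hA.1 (hG_nonneg t ht)) hG1, sub_sub_cancel_left,
    abs_neg, abs_le]
  constructor <;> linarith [neg_abs_le (J 0), le_abs_self (J K), abs_nonneg (J 0), abs_nonneg (J K)]

end LogIntegral

theorem tendsto_rpow_mul_nhdsGT_zero_of_abs_sub_mul_log_le {f : ℝ → ℝ} {κ C : ℝ}
    (hκ : 0 < κ) (hf : ∀ a ∈ Ioc (0 : ℝ) 1, |f a - κ * log a| ≤ C) :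
    Tendsto (fun a => a ^ κ * f a) (𝓝[>] 0) (𝓝 0) := by
  have hpow : Tendsto (fun a : ℝ => a ^ κ) (𝓝[>] 0) (𝓝 0) := by
    simpa [zero_rpow hκ.ne'] using
      ((continuous_rpow_const hκ.le).tendsto 0).mono_left nhdsWithin_le_nhds
  have herr : Tendsto (fun a => a ^ κ * (f a - κ * log a)) (𝓝[>] 0) (𝓝 0) := by
    refine squeeze_zero_norm' ?_ (by simpa using hpow.const_mul C)
    filter_upwards [Ioc_mem_nhdsGT zero_lt_one] with a ha
    rw [norm_mul, norm_of_nonneg (rpow_nonneg ha.1.le κ), mul_comm C]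
    exact mul_le_mul_of_nonneg_left (hf a ha) (rpow_nonneg ha.1.le κ)
  simpa using
    ((tendsto_log_mul_rpow_nhdsGT_zero hκ).const_mul κ).add herr |>.congr fun a => by ring

theorem not_exists_tendsto_div_mul_rpow_neg {f : ℝ → ℝ} {κ : ℝ}
    (hf : Tendsto (fun a => a ^ κ * f a) (𝓝[>] 0) (𝓝 0)) :
    ¬ ∃ c : ℝ, c ≠ 0 ∧ Tendsto (fun a => f a / (c * a ^ (-κ))) (𝓝[>] 0) (𝓝 1) := by
  rintro ⟨c, -, hc⟩
  have hzero : Tendsto (fun a => f a / (c * a ^ (-κ))) (𝓝[>] 0) (𝓝 0) := by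
    refine Tendsto.congr' ?_ (by simpa using hf.div_const c)
    filter_upwards [self_mem_nhdsWithin] with a (ha : 0 < a)
    rw [rpow_neg ha.le]
    field_simp
  exact one_ne_zero (tendsto_nhds_unique hc hzero)

/-- Let `γ > 0`, `k > 0`, `κ > 0`, and `h : [0,1] → ℝ` continuously differentiable (with
derivative `h'`) and positive.  For `a > 0`, let
`I(a) = ∫₀¹ t³ (d/dt)[γ(1−t)² h(t)] / (4π k² a^κ + γ(1−t)² h(t)) dt`
(by the product rule, `(d/dt)[γ(1−t)²h(t)] = γ(−2(1−t)h(t) + (1−t)² h'(t))`).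
Then there is `C₀ > 0` with `|I(a) − κ ln a| ≤ C₀` for all `a ∈ (0,1]`; consequently
`a^κ I(a) → 0` as `a → 0⁺`, and there is no nonzero constant `c` with
`I(a) = c a^{−κ}(1 + o(1))` as `a → 0⁺`. -/
theorem stmt9 (γ k κ : ℝ) (hγ : 0 < γ) (hk : 0 < k) (hκ : 0 < κ) (h h' : ℝ → ℝ)
    (hderiv : ∀ t ∈ Set.Icc (0 : ℝ) 1, HasDerivWithinAt h (h' t) (Set.Icc 0 1) t)
    (hcont : ContinuousOn h' (Set.Icc 0 1))
    (hpos : ∀ t ∈ Set.Icc (0 : ℝ) 1, 0 < h t)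
    (I : ℝ → ℝ)
    (hI : ∀ a : ℝ, I a = ∫ t in (0 : ℝ)..1,
      t ^ 3 * (γ * (-2 * (1 - t) * h t + (1 - t) ^ 2 * h' t)) /
        (4 * Real.pi * k ^ 2 * a ^ κ + γ * (1 - t) ^ 2 * h t)) :
    (∃ C₀ : ℝ, 0 < C₀ ∧ ∀ a ∈ Set.Ioc (0 : ℝ) 1, |I a - κ * Real.log a| ≤ C₀) ∧
      Tendsto (fun a : ℝ => a ^ κ * I a) (𝓝[>] (0 : ℝ)) (𝓝 0) ∧
      ¬ ∃ c : ℝ, c ≠ 0 ∧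
        Tendsto (fun a : ℝ => I a / (c * a ^ (-κ))) (𝓝[>] (0 : ℝ)) (𝓝 1) := by
  set K := 4 * π * k ^ 2
  have hK : 0 < K := by positivity
  have hc : ContinuousOn h (Icc 0 1) := fun t ht => (hderiv t ht).continuousWithinAt
  have hG : ∀ t ∈ Icc (0 : ℝ) 1, HasDerivWithinAt (fun t => γ * (1 - t) ^ 2 * h t)
      (γ * (-2 * (1 - t) * h t + (1 - t) ^ 2 * h' t)) (Icc 0 1) t := fun t ht =>
    ((((hasDerivWithinAt_id t _).const_sub 1).pow 2).const_mul γ |>.mul (hderiv t ht)).congr_deriv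
      (by norm_num; ring)
  have hG' : ContinuousOn (fun t => γ * (-2 * (1 - t) * h t + (1 - t) ^ 2 * h' t)) (Icc 0 1) := by
    fun_prop
  have hG_log : IntervalIntegrable (fun t => log (γ * (1 - t) ^ 2 * h t)) volume 0 1 := by
    convert intervalIntegrable_log_one_sub_sq_mul (g := fun t => γ * h t)
      (continuousOn_const.mul hc) (fun t ht => mul_pos hγ (hpos t ht)) using 3 with t
    ring
  obtain ⟨C, hC, hbound⟩ := exists_abs_integral_pow_three_mul_deriv_div_add_sub_log_le hK hG hG'
    (fun t ht => mul_pos (mul_pos hγ (pow_pos (sub_pos.2 ht.2) 2))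
      (hpos t (Ico_subset_Icc_self ht))) (by simp) hG_log
  have hlog_bound : ∀ a ∈ Ioc (0 : ℝ) 1, |I a - κ * log a| ≤ C + |log K| := by
    intro a ha
    have hA : K * a ^ κ ∈ Ioc 0 K :=
      ⟨mul_pos hK (rpow_pos_of_pos ha.1 κ),
        mul_le_of_le_one_right hK.le (rpow_le_one ha.1.le ha.2 hκ.le)⟩
    have hIa := hbound _ hA
    rw [← hI a, log_mul hK.ne' (rpow_pos_of_pos ha.1 κ).ne', log_rpow ha.1] at hIa
    calc |I a - κ * log a|
        ≤ |I a - (log K + κ * log a)| + |log K + κ * log a - κ * log a| := abs_sub_le _ _ _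
      _ ≤ C + |log K| := by rw [add_sub_cancel_right]; gcongr
  have hlim := tendsto_rpow_mul_nhdsGT_zero_of_abs_sub_mul_log_le hκ hlog_bound
  exact ⟨⟨C + |log K|, by positivity, hlog_bound⟩, hlim,
    not_exists_tendsto_div_mul_rpow_neg hlim⟩
end
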